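/- arXiv:1607.01271 — 3 statements merged into one kernel-verified Lean document; each statement's English description precedes it below -/
import Mathlib

section
/- Let λ > 0 and let δ : ℝ → ℝ be a non-increasing positive function. Define a sequence by x₁ = ((λ − δ(x₀))/(1 + δ(x₀)))·x₀ and x_{n+1} = ((1+λ)/(1+δ(x_n)))·x_n for n ≥ 1, where x₀ > 0 is chosen so that all x_n are positive and increasing. Then for all n ≥ 1: ∑_{j=0}^{n−1} (λ − δ(x_j))·x_j ≥ (1 + δ(x_{n−1}))·x_n. -/
open Finset

theorem one_add_mul_le_sum_of_recurrence (lam : ℝ) (d x : ℕ → ℝ)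
    (hx1 : (1 + d 0) * x 1 = (lam - d 0) * x 0)
    (hxrec : ∀ n ≥ 1, (1 + d n) * x (n + 1) = (1 + lam) * x n)
    (hd : Antitone d) (hx : ∀ n, 0 ≤ x n) (n : ℕ) :
    (1 + d n) * x (n + 1) ≤ ∑ j ∈ range (n + 1), (lam - d j) * x j := by
  induction n with
  | zero => simp [hx1]
  | succ n ih =>
    have hd_le : d (n + 1) * x (n + 1) ≤ d n * x (n + 1) :=
      mul_le_mul_of_nonneg_right (hd n.le_succ) (hx (n + 1))
    calc (1 + d (n + 1)) * x (n + 1 + 1) = (1 + lam) * x (n + 1) := hxrec (n + 1) n.succ_pos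
      _ = (1 + d (n + 1)) * x (n + 1) + (lam - d (n + 1)) * x (n + 1) := by ring
      _ ≤ (1 + d n) * x (n + 1) + (lam - d (n + 1)) * x (n + 1) := by linarith
      _ ≤ ∑ j ∈ range (n + 1 + 1), (lam - d j) * x j := by
        rw [sum_range_succ]; linarith

theorem stmt_8_general (lam : ℝ) (δ : ℝ → ℝ) (hδpos : ∀ x, 0 < δ x)
    (hδmono : Antitone δ) (x : ℕ → ℝ)
    (hx1 : x 1 = (lam - δ (x 0)) / (1 + δ (x 0)) * x 0)
    (hxrec : ∀ n ≥ 1, x (n + 1) = (1 + lam) / (1 + δ (x n)) * x n)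
    (hpos : ∀ n, 0 < x n) (hmono : StrictMono x) :
    ∀ n ≥ 1,
      (1 + δ (x (n - 1))) * x n ≤ ∑ j ∈ Finset.range n, (lam - δ (x j)) * x j := by
  have hne (t : ℝ) : 1 + δ t ≠ 0 := by linarith [hδpos t]
  have hx1' : (1 + δ (x 0)) * x 1 = (lam - δ (x 0)) * x 0 := by
    rw [hx1]; field_simp [hne]
  have hxrec' : ∀ n ≥ 1, (1 + δ (x n)) * x (n + 1) = (1 + lam) * x n := fun n hn => by
    rw [hxrec n hn]; field_simp [hne]
  intro n hn
  obtain ⟨m, rfl⟩ : ∃ m, n = m + 1 := ⟨n - 1, by omega⟩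
  exact one_add_mul_le_sum_of_recurrence lam (fun j => δ (x j)) x hx1' hxrec'
    (hδmono.comp_monotone hmono.monotone) (fun n => (hpos n).le) m

theorem stmt_8 (lam : ℝ) (hlam : 0 < lam) (δ : ℝ → ℝ) (hδpos : ∀ x, 0 < δ x)
    (hδmono : Antitone δ) (x : ℕ → ℝ) (hx0 : 0 < x 0)
    (hx1 : x 1 = (lam - δ (x 0)) / (1 + δ (x 0)) * x 0)
    (hxrec : ∀ n ≥ 1, x (n + 1) = (1 + lam) / (1 + δ (x n)) * x n)
    (hpos : ∀ n, 0 < x n) (hmono : StrictMono x) :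
    ∀ n ≥ 1,
      (1 + δ (x (n - 1))) * x n ≤ ∑ j ∈ Finset.range n, (lam - δ (x j)) * x j :=
  stmt_8_general lam δ hδpos hδmono x hx1 hxrec hpos hmono
end

section
/- Let f be entire, a ∈ ℂ a fixed point of f with |f'(a)| = λ > 1, and suppose |f'(w)| ≥ λ for all w in a disk D(a, r) on which f is injective. Suppose further there is a domain V with closure contained in D(a,r) such that f : V → D(a,r) is bijective. Then for every n ∈ ℕ there exists a domain V_n with closure contained in D(a,r) such that f^n : V_n → D(a,r) is bijective, and |(f^n)'(w)| ≥ λ^n for all w ∈ V_n. -/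
/-!
Since `‖f'‖ ≥ λ > 0` on `D(a, r)`, the map `f` is a local homeomorphism there, so the inverse branch
`g = (f|_V)⁻¹ : D(a, r) → V` is continuous. Setting `V₁ = V` and `V_{n+1} = V ∩ f⁻¹(V_n) = g(V_n)`,
each `V_{n+1}` is a continuous image of the connected set `V_n`, `f^{n+1} = f^n ∘ f` maps it
bijectively onto `D(a, r)`, and the chain rule multiplies the derivative bounds.
-/

open Set Function Topology

theorem IsOpen.image_of_hasStrictDerivAt {𝕜 : Type*} [NontriviallyNormedField 𝕜]
    [CompleteSpace 𝕜] {f f' : 𝕜 → 𝕜} {U : Set 𝕜} (hU : IsOpen U)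
    (hf : ∀ x ∈ U, HasStrictDerivAt f (f' x) x) (h0 : ∀ x ∈ U, f' x ≠ 0) : IsOpen (f '' U) := by
  refine isOpen_iff_mem_nhds.2 ?_
  rintro _ ⟨x, hx, rfl⟩
  rw [← (hf x hx).map_nhds_eq (h0 x hx)]
  exact Filter.image_mem_map (hU.mem_nhds hx)

theorem inter_preimage_eq_invFunOn_image {X Y : Type*} [Nonempty X] {f : X → Y} {V : Set X}
    (hinj : InjOn f V) {W : Set Y} (hW : W ⊆ f '' V) :
    V ∩ f ⁻¹' W = invFunOn f V '' W := by
  ext x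
  constructor
  · rintro ⟨hxV, hxW⟩
    exact ⟨f x, hxW, hinj.leftInvOn_invFunOn hxV⟩
  · rintro ⟨y, hyW, rfl⟩
    have hyV : y ∈ f '' V := hW hyW
    refine ⟨(surjOn_image f V).mapsTo_invFunOn hyV, ?_⟩
    rwa [mem_preimage, (surjOn_image f V).rightInvOn_invFunOn hyV]

section InverseBranch

variable {X Y : Type*} [TopologicalSpace X] [TopologicalSpace Y] [Nonempty X] {f : X → Y}
  {V : Set X}

theorem continuousOn_invFunOn_of_isOpen_image (hinj : InjOn f V) (hV : IsOpen V)
    (hopen : ∀ U ⊆ V, IsOpen U → IsOpen (f '' U)) : ContinuousOn (invFunOn f V) (f '' V) := by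
  refine continuousOn_iff.2 ?_
  rintro _ ⟨x, hx, rfl⟩ t ht hxt
  refine ⟨f '' (t ∩ V), hopen _ inter_subset_right (ht.inter hV), ?_, ?_⟩
  · rw [hinj.leftInvOn_invFunOn hx] at hxt
    exact ⟨x, ⟨hxt, hx⟩, rfl⟩
  · rintro _ ⟨⟨v, ⟨hvt, hvV⟩, rfl⟩, -⟩
    rwa [mem_preimage, hinj.leftInvOn_invFunOn hvV]

theorem IsConnected.inter_preimage_of_isOpen_image (hinj : InjOn f V) (hV : IsOpen V)
    (hopen : ∀ U ⊆ V, IsOpen U → IsOpen (f '' U)) {W : Set Y} (hW : IsConnected W)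
    (hWV : W ⊆ f '' V) : IsConnected (V ∩ f ⁻¹' W) := by
  rw [inter_preimage_eq_invFunOn_image hinj hWV]
  exact hW.image _ ((continuousOn_invFunOn_of_isOpen_image hinj hV hopen).mono hWV)

end InverseBranch

def IsExpandingBranch (f : ℂ → ℂ) (n : ℕ) (lam : ℝ) (B W : Set ℂ) : Prop :=
  IsOpen W ∧ IsConnected W ∧ closure W ⊆ B ∧ BijOn (f^[n]) W B ∧
    ∀ w ∈ W, lam ^ n ≤ ‖deriv (f^[n]) w‖

theorem IsExpandingBranch.inter_preimage {f : ℂ → ℂ} {n : ℕ} {lam : ℝ} {B V W : Set ℂ}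
    (hW : IsExpandingBranch f n lam B W) (hf : Differentiable ℂ f) (hlam : 0 < lam)
    (hVopen : IsOpen V) (hVcl : closure V ⊆ B) (hVbij : BijOn f V B)
    (hexp : ∀ w ∈ V, lam ≤ ‖deriv f w‖) : IsExpandingBranch f (n + 1) lam B (V ∩ f ⁻¹' W) := by
  obtain ⟨hWopen, hWconn, hWcl, hWbij, hWexp⟩ := hW
  have hWB : W ⊆ B := subset_closure.trans hWcl
  have hopen : ∀ U ⊆ V, IsOpen U → IsOpen (f '' U) := fun U hUV hU =>
    hU.image_of_hasStrictDerivAt (fun x _ => (hf.analyticAt x).hasStrictDerivAt)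
      fun x hx hx0 => hlam.not_ge (by simpa [hx0] using hexp x (hUV hx))
  have hbij : BijOn f (V ∩ f ⁻¹' W) W :=
    ⟨fun _ hx => hx.2, hVbij.injOn.mono inter_subset_left, fun y hy => by
      obtain ⟨x, hx, rfl⟩ := hVbij.surjOn (hWB hy)
      exact ⟨x, ⟨hx, hy⟩, rfl⟩⟩
  refine ⟨hVopen.inter (hWopen.preimage hf.continuous),
    hWconn.inter_preimage_of_isOpen_image hVbij.injOn hVopen hopen (hVbij.image_eq ▸ hWB),
    (closure_mono inter_subset_left).trans hVcl, ?_, ?_⟩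
  · rw [iterate_succ]
    exact hWbij.comp hbij
  · rintro w ⟨hwV, hwW⟩
    rw [iterate_succ, deriv_comp w ((hf.iterate n).differentiableAt) hf.differentiableAt,
      norm_mul, pow_succ]
    exact mul_le_mul (hWexp (f w) hwW) (hexp w hwV) hlam.le (norm_nonneg _)

theorem stmt_18_general (f : ℂ → ℂ) (hf : Differentiable ℂ f) (a : ℂ) (r lam : ℝ)
    (hlam1 : 1 < lam)
    (hexp : ∀ w ∈ Metric.ball a r, lam ≤ ‖deriv f w‖)
    (V : Set ℂ) (hVopen : IsOpen V) (hVconn : IsConnected V)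
    (hVcl : closure V ⊆ Metric.ball a r)
    (hVbij : Set.BijOn f V (Metric.ball a r)) :
    ∀ n : ℕ, 1 ≤ n → ∃ Vn : Set ℂ, IsOpen Vn ∧ IsConnected Vn ∧
      closure Vn ⊆ Metric.ball a r ∧ Set.BijOn (f^[n]) Vn (Metric.ball a r) ∧
      ∀ w ∈ Vn, lam ^ n ≤ ‖deriv (f^[n]) w‖ := by
  have hlam : 0 < lam := one_pos.trans hlam1
  have hexpV : ∀ w ∈ V, lam ≤ ‖deriv f w‖ := fun w hw => hexp w (hVcl (subset_closure hw))
  intro n hn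
  induction n, hn using Nat.le_induction with
  | base => exact ⟨V, hVopen, hVconn, hVcl, by simpa using hVbij, by simpa using hexpV⟩
  | succ n _ ih =>
    obtain ⟨W, hW⟩ := ih
    exact ⟨V ∩ f ⁻¹' W, IsExpandingBranch.inter_preimage hW hf hlam hVopen hVcl hVbij hexpV⟩

theorem stmt_18 (f : ℂ → ℂ) (hf : Differentiable ℂ f) (a : ℂ) (r lam : ℝ) (hr : 0 < r)
    (hfix : f a = a) (hlam : ‖deriv f a‖ = lam) (hlam1 : 1 < lam)
    (hexp : ∀ w ∈ Metric.ball a r, lam ≤ ‖deriv f w‖)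
    (hinj : Set.InjOn f (Metric.ball a r))
    (V : Set ℂ) (hVopen : IsOpen V) (hVconn : IsConnected V)
    (hVcl : closure V ⊆ Metric.ball a r)
    (hVbij : Set.BijOn f V (Metric.ball a r)) :
    ∀ n : ℕ, 1 ≤ n → ∃ Vn : Set ℂ, IsOpen Vn ∧ IsConnected Vn ∧
      closure Vn ⊆ Metric.ball a r ∧ Set.BijOn (f^[n]) Vn (Metric.ball a r) ∧
      ∀ w ∈ Vn, lam ^ n ≤ ‖deriv (f^[n]) w‖ :=
  stmt_18_general f hf a r lam hlam1 hexp V hVopen hVconn hVcl hVbij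
end

section
/- Let f be entire, z ∈ ℂ with χ̄(f, z) := limsup_{n→∞} (1/n) log (f^n)^#(z) = ∞, and let ζ ∈ ℂ, m, k ∈ ℕ be such that f^m(ζ) = f^k(z) and (f^m)'(ζ) ≠ 0. Then χ̄(f, ζ) = ∞ as well. -/
/-!
By the chain rule, `(f^{j+m})'(ζ) = (f^j)'(w) (f^m)'(ζ)` and `(f^{j+k})'(z) = (f^j)'(w) (f^k)'(z)`
for `w = f^m(ζ) = f^k(z)`, while the denominators `1 + |f^{j+m}(ζ)|² = 1 + |f^{j+k}(z)|²` agree.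
Hence `log (f^{j+m})^#(ζ) = log (f^{j+k})^#(z) + c` for a constant `c`, and shifting the index and
adding a constant does not affect whether `log (f^n)^#` is frequently larger than any linear
function of `n`. Infinite exponent also forces `(f^n)'(z) ≠ 0` for all `n`, so the logarithms are
not junk values.
-/

open Filter

/-- The upper Lyapunov exponent of `f` at `z`, as an extended real number. -/
noncomputable def upperLyapunov (f : ℂ → ℂ) (z : ℂ) : EReal :=
  limsup (fun n : ℕ =>
    ((Real.log (‖deriv (f^[n]) z‖ / (1 + ‖f^[n] z‖ ^ 2)) / n : ℝ) : EReal))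
    atTop

lemma deriv_iterate_add {𝕜 : Type*} [NontriviallyNormedField 𝕜] {f : 𝕜 → 𝕜}
    (hf : Differentiable 𝕜 f) (a b : ℕ) (x : 𝕜) :
    deriv (f^[a + b]) x = deriv (f^[a]) (f^[b] x) * deriv (f^[b]) x := by
  rw [Function.iterate_add]
  exact deriv_comp x ((hf.iterate a) _) ((hf.iterate b) _)

/-- `log (f^n)^#(z)`, the logarithm of the spherical derivative of the `n`-th iterate. -/
noncomputable def logSphericalDerivIterate (f : ℂ → ℂ) (n : ℕ) (z : ℂ) : ℝ :=
  Real.log (‖deriv (f^[n]) z‖ / (1 + ‖f^[n] z‖ ^ 2))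

lemma logSphericalDerivIterate_add {f : ℂ → ℂ} (hf : Differentiable ℂ f) {n p : ℕ} {x : ℂ}
    (hn : deriv (f^[n]) (f^[p] x) ≠ 0) (hp : deriv (f^[p]) x ≠ 0) :
    logSphericalDerivIterate f (n + p) x =
      logSphericalDerivIterate f n (f^[p] x) + Real.log ‖deriv (f^[p]) x‖ := by
  have hden : 1 + ‖f^[n] (f^[p] x)‖ ^ 2 ≠ 0 := by positivity
  rw [logSphericalDerivIterate, logSphericalDerivIterate, deriv_iterate_add hf,
    Function.iterate_add_apply, norm_mul, mul_div_right_comm,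
    Real.log_mul (div_ne_zero (norm_ne_zero_iff.2 hn) hden) (norm_ne_zero_iff.2 hp)]

section FrequentlySuperlinear

variable {ι : Type*} {l : Filter ι}

lemma limsup_coe_eReal_eq_top_iff {u : ι → ℝ} :
    limsup (fun i => (u i : EReal)) l = ⊤ ↔ ∀ M : ℝ, ∃ᶠ i in l, M < u i := by
  rw [← top_le_iff, le_limsup_iff]
  refine ⟨fun h M => (h M (EReal.coe_lt_top M)).mono fun _ => EReal.coe_lt_coe_iff.1, ?_⟩
  intro h y hy
  induction y using EReal.rec with
  | bot => exact (h 0).mono fun _ _ => EReal.bot_lt_coe _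
  | coe M => exact (h M).mono fun _ => EReal.coe_lt_coe_iff.2
  | top => exact absurd hy (lt_irrefl _)

variable {u : ℕ → ℝ}

lemma frequently_mul_lt_add_const (h : ∀ M : ℝ, ∃ᶠ n in atTop, M * n < u n) (c : ℝ) (M : ℝ) :
    ∃ᶠ n in atTop, M * n < u n + c := by
  refine ((h (M + |c|)).and_eventually (eventually_ge_atTop 1)).mono fun n ⟨hn, h1⟩ => ?_
  have h1' : (1 : ℝ) ≤ n := by exact_mod_cast h1
  nlinarith [neg_abs_le c, abs_nonneg c]

lemma frequently_mul_lt_comp_add (h : ∀ M : ℝ, ∃ᶠ n in atTop, M * n < u n) (k : ℕ) (M : ℝ) :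
    ∃ᶠ j in atTop, M * j < u (j + k) := by
  refine (tendsto_sub_atTop_nat k).frequently_map _ (fun n ⟨hn, hk⟩ => ?_)
    ((h |M|).and_eventually (eventually_ge_atTop k))
  rw [Nat.sub_add_cancel hk]
  have : (↑(n - k) : ℝ) ≤ n := by exact_mod_cast Nat.sub_le n k
  nlinarith [le_abs_self M, abs_nonneg M, (Nat.cast_nonneg (n - k) : (0 : ℝ) ≤ _)]

lemma frequently_mul_lt_of_comp_add (k : ℕ) (h : ∀ M : ℝ, ∃ᶠ j in atTop, M * j < u (j + k))
    (M : ℝ) : ∃ᶠ n in atTop, M * n < u n := by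
  refine (tendsto_add_atTop_nat k).frequently_map _ (fun j ⟨hj, hk⟩ => ?_)
    ((h (2 * |M|)).and_eventually (eventually_ge_atTop k))
  have hk' : (k : ℝ) ≤ j := by exact_mod_cast hk
  push_cast
  nlinarith [le_abs_self M, abs_nonneg M]

end FrequentlySuperlinear

lemma upperLyapunov_eq_top_iff {f : ℂ → ℂ} {z : ℂ} :
    upperLyapunov f z = ⊤ ↔
      ∀ M : ℝ, ∃ᶠ n in atTop, M * n < logSphericalDerivIterate f n z := by
  rw [upperLyapunov, limsup_coe_eReal_eq_top_iff]
  refine forall_congr' fun M => frequently_congr ?_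
  filter_upwards [eventually_gt_atTop 0] with n hn
  exact lt_div_iff₀ (by exact_mod_cast hn)

/-- Once `(f^{n₀})'(z) = 0`, every later `log (f^n)^#(z)` is the junk value `log 0 = 0`. -/
lemma deriv_iterate_ne_zero_of_upperLyapunov_eq_top {f : ℂ → ℂ} (hf : Differentiable ℂ f)
    {z : ℂ} (h : upperLyapunov f z = ⊤) (n₀ : ℕ) : deriv (f^[n₀]) z ≠ 0 := by
  intro h₀
  have hzero : ∀ᶠ n in atTop, logSphericalDerivIterate f n z = 0 := by
    filter_upwards [eventually_ge_atTop n₀] with n hn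
    rw [logSphericalDerivIterate, ← Nat.sub_add_cancel hn, deriv_iterate_add hf, h₀]
    simp
  obtain ⟨n, hpos, hn⟩ := ((upperLyapunov_eq_top_iff.1 h 0).and_eventually hzero).exists
  simp [hn] at hpos

theorem stmt_19 (f : ℂ → ℂ) (hf : Differentiable ℂ f) (z ζ : ℂ) (m k : ℕ)
    (hlyap : upperLyapunov f z = ⊤)
    (horb : f^[m] ζ = f^[k] z) (hd : deriv (f^[m]) ζ ≠ 0) :
    upperLyapunov f ζ = ⊤ := by
  have hne := deriv_iterate_ne_zero_of_upperLyapunov_eq_top hf hlyap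
  have hw : ∀ j, deriv (f^[j]) (f^[k] z) ≠ 0 := fun j =>
    left_ne_zero_of_mul (deriv_iterate_add hf j k z ▸ hne (j + k))
  have hshift : ∀ j, logSphericalDerivIterate f (j + m) ζ =
      logSphericalDerivIterate f (j + k) z +
        (Real.log ‖deriv (f^[m]) ζ‖ - Real.log ‖deriv (f^[k]) z‖) := fun j => by
    rw [logSphericalDerivIterate_add hf (horb ▸ hw j) hd,
      logSphericalDerivIterate_add hf (hw j) (hne k), horb]
    ring
  rw [upperLyapunov_eq_top_iff] at hlyap ⊢
  refine frequently_mul_lt_of_comp_add m ?_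
  simp_rw [hshift]
  exact frequently_mul_lt_add_const (frequently_mul_lt_comp_add hlyap k) _
end
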